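/- Fix an integer k ≥ 2. Assume that there are two players with preferences ≽^sing_1 and ≽^sing_2 on the single items of a set S of m items. Then there exists a subset T ⊆ S with |T| ≤ ⌈(m+k−1)/k⌉ such that T is necessarily worth at least 1/k with respect to both ≽^sing_1 and ≽^sing_2. -/

import Mathlib

/-! Sort the items by the first player's preference and cut the sorted list into blocks: the
best item alone, then runs of `k` consecutive items, so there are at most `⌈(m+k−1)/k⌉` blocks.
Let `T` consist of the second player's favourite item of every block. Every other item of a
block is beaten, for the second player, by the chosen item of its own block and, for the first
player, by the chosen item of the previous block. A block has at most `k − 1` items outside `T`,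
so numbering them splits `Tᶜ` into `k − 1` parts, each of which is matched injectively into `T`
by better items. Responsiveness lets us swap the items of a part for their matches one at a
time, and monotonicity then adds the rest of `T`. -/

open Finset

/-- A preference on subsets: a complete (total, hence reflexive) and transitive relation. -/
def IsPref {m : ℕ} (R : Finset (Fin m) → Finset (Fin m) → Prop) : Prop :=
  (∀ A B, R A B ∨ R B A) ∧ ∀ A B C, R A B → R B C → R A C

/-- A preference on single items: a complete and transitive relation. -/
def IsSingPref {m : ℕ} (Rs : Fin m → Fin m → Prop) : Prop :=
  (∀ x y, Rs x y ∨ Rs y x) ∧ ∀ x y z, Rs x y → Rs y z → Rs x z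

/-- A preference is monotonic if `T ∪ {x} ≽ T` for every subset `T` and item `x`. -/
def MonotonicPref {m : ℕ} (R : Finset (Fin m) → Finset (Fin m) → Prop) : Prop :=
  ∀ (T : Finset (Fin m)) (x : Fin m), R (insert x T) T

/-- A preference on subsets is responsive w.r.t. a preference `Rs` on single items if it is
monotonic and `(T \ {y}) ∪ {x} ≽ T` whenever `x ∉ T`, `y ∈ T` and `x ≽ˢ y`. -/
def Responsive {m : ℕ} (Rs : Fin m → Fin m → Prop)
    (R : Finset (Fin m) → Finset (Fin m) → Prop) : Prop :=
  MonotonicPref R ∧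
    ∀ (T : Finset (Fin m)) (x y : Fin m),
      x ∉ T → y ∈ T → Rs x y → R (insert x (T.erase y)) T

/-- A preference on subsets is consistent with a preference on single items if its
restriction to singletons agrees with it. -/
def Consistent {m : ℕ} (Rs : Fin m → Fin m → Prop)
    (R : Finset (Fin m) → Finset (Fin m) → Prop) : Prop :=
  ∀ x y : Fin m, R {x} {y} ↔ Rs x y

/-- `T` is necessarily agreeable w.r.t. `Rs` if `T ≽ Tᶜ` for every responsive preference
consistent with `Rs`. -/
def NecAgreeable {m : ℕ} (Rs : Fin m → Fin m → Prop) (T : Finset (Fin m)) : Prop :=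
  ∀ R : Finset (Fin m) → Finset (Fin m) → Prop,
    IsPref R → Responsive Rs R → Consistent Rs R → R T Tᶜ

/-- `T` is possibly agreeable w.r.t. `Rs` if `T ≻ Tᶜ` for some responsive preference
consistent with `Rs`. -/
def PossAgreeable {m : ℕ} (Rs : Fin m → Fin m → Prop) (T : Finset (Fin m)) : Prop :=
  ∃ R : Finset (Fin m) → Finset (Fin m) → Prop,
    IsPref R ∧ Responsive Rs R ∧ Consistent Rs R ∧ R T Tᶜ ∧ ¬ R Tᶜ T

/-- `T` is necessarily worth at least `1/k` w.r.t. `Rs`: the complement `Tᶜ` can be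
partitioned into `k − 1` sets `T_1,…,T_{k−1}` with `T ≽ T_i` for all `i` and every
responsive preference `≽` consistent with `Rs`. -/
def NecWorth {m : ℕ} (k : ℕ) (Rs : Fin m → Fin m → Prop) (T : Finset (Fin m)) : Prop :=
  ∃ P : Fin (k - 1) → Finset (Fin m),
    (∀ i j, i ≠ j → Disjoint (P i) (P j)) ∧
    Finset.univ.biUnion P = Tᶜ ∧
    ∀ (i : Fin (k - 1)) (R : Finset (Fin m) → Finset (Fin m) → Prop),
      IsPref R → Responsive Rs R → Consistent Rs R → R T (P i)

theorem exists_equiv_fin_rel_of_le {α : Type*} [Fintype α] (r : α → α → Prop)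
    [Std.Total r] [IsTrans α r] :
    ∃ e : α ≃ Fin (Fintype.card α), ∀ x y, e x ≤ e y → r x y := by
  classical
  have : Std.Refl r := ⟨fun x => (Std.Total.total x x).elim id id⟩
  set l := (univ : Finset α).toList.insertionSort r
  have hperm : l.Perm univ.toList := List.perm_insertionSort r _
  have hlen : l.length = Fintype.card α := by simp [l, hperm.length_eq]
  let e : Fin l.length ≃ α :=
    (hperm.nodup_iff.2 (nodup_toList _)).getEquivOfForallMemList l (by simp [l])
  refine ⟨e.symm.trans (finCongr hlen), fun x y hxy => ?_⟩
  have h : r (e (e.symm x)) (e (e.symm y)) :=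
    (List.pairwise_insertionSort r _).rel_get_of_le (by simpa using hxy)
  simpa using h

theorem IsSingPref.exists_equiv_fin {m : ℕ} {Rs : Fin m → Fin m → Prop} (h : IsSingPref Rs) :
    ∃ e : Fin m ≃ Fin m, ∀ x y, e x ≤ e y → Rs x y := by
  have : Std.Total Rs := ⟨h.1⟩
  have : IsTrans (Fin m) Rs := ⟨h.2⟩
  obtain ⟨e, he⟩ := exists_equiv_fin_rel_of_le Rs
  exact ⟨e.trans (finCongr (Fintype.card_fin m)), fun x y hxy => he x y (by simpa using hxy)⟩

theorem IsSingPref.exists_forall_rel {m : ℕ} {Rs : Fin m → Fin m → Prop} (h : IsSingPref Rs)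
    {s : Finset (Fin m)} (hs : s.Nonempty) : ∃ a ∈ s, ∀ y ∈ s, Rs a y := by
  obtain ⟨e, he⟩ := h.exists_equiv_fin
  obtain ⟨a, ha, hmin⟩ := s.exists_min_image e hs
  exact ⟨a, ha, fun y hy => he a y (hmin y hy)⟩

section Preference

variable {m : ℕ} {Rs : Fin m → Fin m → Prop} {R : Finset (Fin m) → Finset (Fin m) → Prop}

theorem IsPref.refl (hR : IsPref R) (A : Finset (Fin m)) : R A A :=
  (hR.1 A A).elim id id

theorem IsPref.rel_union_left (hR : IsPref R) (hM : MonotonicPref R) (A D : Finset (Fin m)) :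
    R (A ∪ D) A := by
  induction D using Finset.induction_on with
  | empty => simpa using hR.refl A
  | insert x D _ ih => simpa only [union_insert] using hR.2 _ _ _ (hM (A ∪ D) x) ih

theorem IsPref.rel_of_subset (hR : IsPref R) (hM : MonotonicPref R) {A B : Finset (Fin m)}
    (h : A ⊆ B) : R B A := by
  simpa [union_sdiff_of_subset h] using hR.rel_union_left hM A (B \ A)

theorem IsPref.rel_image_of_injOn (hR : IsPref R) (hresp : Responsive Rs R) {V : Finset (Fin m)}
    {g : Fin m → Fin m} (hinj : Set.InjOn g V) (hdom : ∀ y ∈ V, Rs (g y) y)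
    (hout : ∀ y ∈ V, g y ∉ V) : R (V.image g) V := by
  suffices ∀ D ⊆ V, R (D.image g ∪ (V \ D)) V by simpa using this V subset_rfl
  intro D hD
  induction D using Finset.induction_on with
  | empty => simpa using hR.refl V
  | insert y D hyD ih =>
    obtain ⟨hyV, hDV⟩ := insert_subset_iff.1 hD
    have hgy : g y ∉ D.image g ∪ (V \ D) := by
      simp only [mem_union, mem_image, mem_sdiff, not_or, not_exists, not_and]
      exact ⟨fun z hz hzy => hyD (hinj (hDV hz) hyV hzy ▸ hz), fun h => absurd h (hout y hyV)⟩
    have hswap : insert (g y) ((D.image g ∪ (V \ D)).erase y) =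
        (insert y D).image g ∪ (V \ insert y D) := by
      ext z
      have hDout : ∀ a ∈ D, g a ∉ V := fun a ha => hout a (hDV ha)
      simp only [mem_insert, mem_erase, mem_union, mem_image, mem_sdiff]
      grind
    rw [← hswap]
    exact hR.2 _ _ _ (hresp.2 _ (g y) y hgy (by simp [hyD, hyV]) (hdom y hyV)) (ih hDV)

theorem IsPref.rel_of_injOn (hR : IsPref R) (hresp : Responsive Rs R) {T V : Finset (Fin m)}
    (hTV : Disjoint T V) {g : Fin m → Fin m} (hgT : ∀ y ∈ V, g y ∈ T) (hinj : Set.InjOn g V)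
    (hdom : ∀ y ∈ V, Rs (g y) y) : R T V :=
  hR.2 _ _ _ (hR.rel_of_subset hresp.1 (image_subset_iff.2 hgT))
    (hR.rel_image_of_injOn hresp hinj hdom fun y hy => disjoint_left.1 hTV (hgT y hy))

end Preference

theorem strictMonoOn_card_filter_lt {α : Type*} [LinearOrder α] (s : Finset α) :
    StrictMonoOn (fun x => #{z ∈ s | z < x}) s := by
  intro x hx y _ hxy
  refine card_lt_card ((ssubset_iff_of_subset fun z => ?_).2 ⟨x, ?_, ?_⟩)
  · simpa only [mem_filter, and_imp] using fun hz hzx => ⟨hz, hzx.trans hxy⟩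
  · simpa using ⟨hx, hxy⟩
  · simp

theorem exists_partition_injOn_of_card_fiber_le {α β : Type*} [LinearOrder α] [DecidableEq β]
    {U : Finset α} {f : α → β} {n : ℕ} (hf : ∀ b, #{x ∈ U | f x = b} ≤ n) :
    ∃ P : Fin n → Finset α, (∀ i j, i ≠ j → Disjoint (P i) (P j)) ∧
      univ.biUnion P = U ∧ ∀ i, Set.InjOn f (P i) := by
  set fiber : α → Finset α := fun x => {z ∈ U | f z = f x}
  set rank : α → ℕ := fun x => #{z ∈ fiber x | z < x}
  have hmem : ∀ x ∈ U, x ∈ fiber x := fun x hx => by simp [fiber, hx]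
  have hrank : ∀ x ∈ U, rank x < n := fun x hx =>
    (card_lt_card (filter_ssubset (p := (· < x)).2 ⟨x, hmem x hx, lt_irrefl x⟩)).trans_le
      (hf (f x))
  refine ⟨fun i => {x ∈ U | rank x = i}, fun i j hij => ?_, ?_, fun i x hx y hy hxy => ?_⟩
  · exact disjoint_filter.2 fun x _ hi hj => hij (Fin.ext (hi ▸ hj))
  · ext x
    simp only [mem_biUnion, mem_univ, mem_filter, true_and]
    exact ⟨fun ⟨_, hx, _⟩ => hx, fun hx => ⟨⟨rank x, hrank x hx⟩, hx, rfl⟩⟩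
  · simp only [coe_filter, Set.mem_ofPred_eq] at hx hy
    have hfiber : fiber y = fiber x := by simp [fiber, hxy]
    have hxy : rank x = rank y := hx.2.trans hy.2.symm
    simp only [rank, hfiber] at hxy
    exact (strictMonoOn_card_filter_lt (fiber x)).injOn (hmem x hx.1) (hfiber ▸ hmem y hy.1) hxy

theorem necWorth_of_card_fiber_le {m k : ℕ} {Rs : Fin m → Fin m → Prop} {T : Finset (Fin m)}
    {g : Fin m → Fin m} (hgT : ∀ y ∉ T, g y ∈ T) (hdom : ∀ y ∉ T, Rs (g y) y)
    (hfiber : ∀ t, #{y ∈ Tᶜ | g y = t} ≤ k - 1) : NecWorth k Rs T := by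
  obtain ⟨P, hdisj, hunion, hinj⟩ := exists_partition_injOn_of_card_fiber_le hfiber
  have hP : ∀ i, ∀ y ∈ P i, y ∉ T := fun i y hy =>
    mem_compl.1 (hunion ▸ mem_biUnion.2 ⟨i, mem_univ i, hy⟩)
  refine ⟨P, hdisj, hunion, fun i R hR hresp _ => hR.rel_of_injOn hresp ?_
    (fun y hy => hgT y (hP i y hy)) (hinj i) (fun y hy => hdom y (hP i y hy))⟩
  exact disjoint_left.2 fun y hyT hy => hP i y hy hyT

section Blocks

variable {m k : ℕ} {b : Fin m → ℕ} {c : ℕ → Fin m}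

theorem card_filter_notMem_image_le (hbc : ∀ y, b (c (b y)) = b y)
    (hcard : ∀ j, #{x | b x = j} ≤ k) (j : ℕ) :
    #{y ∈ ((univ.image b).image c)ᶜ | b y = j} ≤ k - 1 := by
  by_cases hj : ∃ x, b x = j
  · obtain ⟨x, rfl⟩ := hj
    have hsub : {y ∈ ((univ.image b).image c)ᶜ | b y = b x} ⊆
        ({y | b y = b x} : Finset (Fin m)).erase (c (b x)) := by
      intro y
      simp only [mem_filter, mem_compl, mem_univ, true_and, mem_erase]
      refine fun ⟨hyT, hy⟩ => ⟨fun h => hyT ?_, hy⟩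
      rw [h]
      exact mem_image_of_mem c (mem_image_of_mem b (mem_univ x))
    refine (card_le_card hsub).trans ?_
    rw [card_erase_of_mem (by simpa using hbc x)]
    exact Nat.sub_le_sub_right (hcard (b x)) 1
  · simp [filter_eq_empty_iff.2 fun y _ hy => hj ⟨y, hy⟩]

theorem one_le_of_notMem_image (hbc : ∀ y, b (c (b y)) = b y)
    (hcard_zero : #{x | b x = 0} ≤ 1) {y : Fin m} (hy : y ∉ (univ.image b).image c) :
    1 ≤ b y := by
  by_contra! hy1
  have hy0 : b y = 0 := by omega
  refine hy (card_le_one.1 hcard_zero (c (b y)) ?_ y ?_ ▸ ?_)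
  · simpa [hy0] using hbc y
  · simpa using hy0
  · exact mem_image_of_mem c (mem_image_of_mem b (mem_univ y))

end Blocks

theorem exists_necWorth_of_blocks {m : ℕ} (k : ℕ) {Rs1 Rs2 : Fin m → Fin m → Prop}
    (h2 : IsSingPref Rs2) (b : Fin m → ℕ) (hb : ∀ x y, b x < b y → Rs1 x y)
    (hcard : ∀ j, #{x | b x = j} ≤ k) (hcard_zero : #{x | b x = 0} ≤ 1)
    (hgap : ∀ y, 1 ≤ b y → ∃ z, b z + 1 = b y) :
    ∃ T : Finset (Fin m), #T ≤ #(univ.image b) ∧ NecWorth k Rs1 T ∧ NecWorth k Rs2 T := by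
  rcases isEmpty_or_nonempty (Fin m) with hm | hm
  · refine ⟨∅, by simp, ?_, ?_⟩ <;>
      exact necWorth_of_card_fiber_le (g := id) isEmptyElim isEmptyElim isEmptyElim
  have hbest : ∀ j, ∃ c, (∃ x, b x = j) → b c = j ∧ ∀ y, b y = j → Rs2 c y := fun j => by
    by_cases hj : ∃ x, b x = j
    · obtain ⟨c, hc, hbest⟩ := h2.exists_forall_rel (s := {x | b x = j})
        (by simpa [Finset.Nonempty] using hj)
      exact ⟨c, fun _ => ⟨(mem_filter.1 hc).2, fun y hy => hbest y (by simpa using hy)⟩⟩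
    · exact ⟨Classical.arbitrary _, fun h => absurd h hj⟩
  choose c hc using hbest
  have hbc : ∀ y, b (c (b y)) = b y := fun y => (hc (b y) ⟨y, rfl⟩).1
  set T := (univ.image b).image c
  have hcT : ∀ y, c (b y) ∈ T := fun y => mem_image_of_mem c (mem_image_of_mem b (mem_univ y))
  have hcompl : ∀ j, #{y ∈ Tᶜ | b y = j} ≤ k - 1 := card_filter_notMem_image_le hbc hcard
  have hpos : ∀ y ∉ T, 1 ≤ b y := fun y => one_le_of_notMem_image hbc hcard_zero
  refine ⟨T, card_image_le, necWorth_of_card_fiber_le (g := fun y => c (b y - 1)) ?_ ?_ ?_,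
    necWorth_of_card_fiber_le (g := fun y => c (b y)) (fun y _ => hcT y)
      (fun y _ => (hc (b y) ⟨y, rfl⟩).2 y rfl) fun t => (card_le_card ?_).trans (hcompl (b t))⟩
  · intro y hyT
    obtain ⟨z, hz⟩ := hgap y (hpos y hyT)
    simpa [← hz] using hcT z
  · intro y hyT
    obtain ⟨z, hz⟩ := hgap y (hpos y hyT)
    simpa [← hz] using hb _ y (by have := hbc z; omega)
  · intro t
    refine (card_le_card fun y => ?_).trans (hcompl (b t + 1))
    simp only [mem_filter]
    rintro ⟨hyT, rfl⟩
    obtain ⟨z, hz⟩ := hgap y (hpos y (mem_compl.1 hyT))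
    simp [hyT, ← hz, hbc]
  · intro y
    simp only [mem_filter]
    rintro ⟨hyT, rfl⟩
    exact ⟨hyT, (hbc y).symm⟩

section CeilBlocks

variable {α : Type*} {n k : ℕ} (e : α ≃ Fin n)

theorem card_filter_add_pred_div_eq_le [Fintype α] (hk : 0 < k) (j : ℕ) :
    #{x | ((e x : ℕ) + k - 1) / k = j} ≤ k := by
  refine (card_le_card_of_injOn (fun x => ((e x : ℕ) + k - 1) % k) (t := range k)
    (fun x _ => by simpa using Nat.mod_lt _ hk) fun x hx y hy hxy => e.injective ?_).trans
    (card_range k).le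
  simp only [coe_filter, mem_univ, true_and, Set.mem_ofPred_eq] at hx hy
  have hx' := Nat.div_add_mod ((e x : ℕ) + k - 1) k
  have hy' := Nat.div_add_mod ((e y : ℕ) + k - 1) k
  rw [hx, ← hy] at hx'
  simp only at hxy
  exact Fin.ext (by omega)

theorem card_filter_add_pred_div_eq_zero_le_one [Fintype α] (hk : 0 < k) :
    #{x | ((e x : ℕ) + k - 1) / k = 0} ≤ 1 := by
  refine card_le_one.2 fun x hx y hy => e.injective (Fin.ext ?_)
  simp only [mem_filter, mem_univ, true_and, Nat.div_eq_zero_iff_lt hk] at hx hy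
  omega

theorem exists_add_pred_div_add_one_eq (hk : 0 < k) (y : α)
    (hy : 1 ≤ ((e y : ℕ) + k - 1) / k) :
    ∃ z, ((e z : ℕ) + k - 1) / k + 1 = ((e y : ℕ) + k - 1) / k := by
  obtain ⟨j, hj⟩ : ∃ j, ((e y : ℕ) + k - 1) / k = j + 1 := ⟨_, (Nat.sub_add_cancel hy).symm⟩
  have hjk : (j + 1) * k ≤ (e y : ℕ) + k - 1 := hj ▸ Nat.div_mul_le_self _ k
  rw [add_one_mul] at hjk
  refine ⟨e.symm ⟨j * k, by omega⟩, ?_⟩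
  rw [hj, e.apply_symm_apply, Fin.val_mk,
    Nat.div_eq_of_lt_le (k := j) (by omega) (by rw [add_one_mul]; omega)]

theorem card_image_add_pred_div_le [Fintype α] (hk : 0 < k) :
    #(univ.image fun x => ((e x : ℕ) + k - 1) / k) ≤ (n + 2 * k - 2) / k := by
  refine (card_le_card fun j => ?_).trans (card_range _).le
  simp only [mem_image, mem_univ, true_and, mem_range, forall_exists_index]
  rintro x rfl
  rw [← Nat.add_one_le_iff, ← Nat.add_div_right _ hk]
  exact Nat.div_le_div_right (by omega)

end CeilBlocks

/-- Two players with preferences on single items: for any `k ≥ 2` there is a subset of size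
at most `⌈(m+k−1)/k⌉ = (m+2k−2)/k` (ℕ-division) that is necessarily worth at least `1/k`
with respect to both. -/
theorem stmt_17 {m : ℕ} (k : ℕ) (hk : 2 ≤ k)
    (Rs1 Rs2 : Fin m → Fin m → Prop)
    (h1 : IsSingPref Rs1) (h2 : IsSingPref Rs2) :
    ∃ T : Finset (Fin m), T.card ≤ (m + 2 * k - 2) / k ∧
      NecWorth k Rs1 T ∧ NecWorth k Rs2 T := by
  have hk0 : 0 < k := by omega
  obtain ⟨e, he⟩ := h1.exists_equiv_fin
  -- the item in position `p` goes to block `⌈p / k⌉`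
  obtain ⟨T, hT, hT1, hT2⟩ := exists_necWorth_of_blocks k h2 (fun x => ((e x : ℕ) + k - 1) / k)
    (fun x y hxy => he x y (by have := Nat.lt_of_div_lt_div hxy; omega))
    (card_filter_add_pred_div_eq_le e hk0) (card_filter_add_pred_div_eq_zero_le_one e hk0)
    (exists_add_pred_div_add_one_eq e hk0)
  exact ⟨T, hT.trans (card_image_add_pred_div_le e hk0), hT1, hT2⟩
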